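/- Let A be a nonzero m×n real matrix on which k GE steps are performed with pivot positions (i_1,j_1),…,(i_k,j_k) (distinct rows, distinct columns), pivot magnitudes p_1,…,p_k and pivot qualities β_1,…,β_k ∈ (0,1]. Then for every 0 ≤ r ≤ k−1, the product of the remaining pivot magnitudes satisfies ∏_{i=r+1}^{k} p_i ≤ ((k−r)^{1/2} · β_{r+1}^{-1} · p_{r+1})^{k−r}. -/

import Mathlib

open Finset Real

/-- One Gaussian elimination step on `A` with pivot position `(i, j)`:
`A_{st} - A_{sj} A_{it} / A_{ij}`. -/
noncomputable def geStep {m n : ℕ} (A : Matrix (Fin m) (Fin n) ℝ) (i : Fin m) (j : Fin n) :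
    Matrix (Fin m) (Fin n) ℝ :=
  Matrix.of fun s t => A s t - A s j * A i t / A i j

/-- The matrix `A^{(r)}` after `r` GE steps on `A`, where step `r` uses pivot
position `piv (r - 1)` (so `piv` is 0-indexed). -/
noncomputable def geIter {m n : ℕ} (A : Matrix (Fin m) (Fin n) ℝ)
    (piv : ℕ → Fin m × Fin n) : ℕ → Matrix (Fin m) (Fin n) ℝ
  | 0 => A
  | r + 1 => geStep (geIter A piv r) (piv r).1 (piv r).2

/-- Maximum absolute entry of a matrix. -/
noncomputable def maxAbs {m n : ℕ} (A : Matrix (Fin m) (Fin n) ℝ) : ℝ :=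
  ⨆ s, ⨆ t, |A s t|

/-- The magnitude `p_r = |A^{(r-1)}_{i_r j_r}|` of the `r`-th pivot (1-indexed `r`). -/
noncomputable def pivMag {m n : ℕ} (A : Matrix (Fin m) (Fin n) ℝ)
    (piv : ℕ → Fin m × Fin n) (r : ℕ) : ℝ :=
  |geIter A piv (r - 1) (piv (r - 1)).1 (piv (r - 1)).2|

/-!
Eliminating with the remaining pivots of `A^{(r)}` is Gaussian elimination on the `(k - r)`-square
block of `A^{(r)}` they occupy, so by repeated Schur complements the product
`p_{r+1} ⋯ p_k` is the absolute value of the determinant of that block. Every entry of `A^{(r)}`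
is at most `max |A^{(r)}| = p_{r+1} / β_{r+1}` in absolute value, and Hadamard's bound
`|det C| ≤ (√d · M)^d` for a `d × d` matrix with entries bounded by `M` (AM-GM applied to the
eigenvalues of `Cᵀ C`, whose trace is at most `d² M²`) finishes the proof.
-/

open Matrix

theorem Finset.prod_le_sum_div_card_pow {ι : Type*} (s : Finset ι) (f : ι → ℝ)
    (hf : ∀ i ∈ s, 0 ≤ f i) : ∏ i ∈ s, f i ≤ ((∑ i ∈ s, f i) / #s) ^ #s := by
  rcases s.eq_empty_or_nonempty with rfl | hs
  · simp
  have amgm := Real.geom_mean_le_arith_mean s (fun _ ↦ 1) f (fun _ _ ↦ zero_le_one)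
    (by simpa using hs) hf
  simp only [rpow_one, sum_const, nsmul_eq_mul, mul_one, one_mul] at amgm
  calc ∏ i ∈ s, f i = ((∏ i ∈ s, f i) ^ (#s : ℝ)⁻¹) ^ #s :=
        (rpow_inv_natCast_pow (prod_nonneg hf) hs.card_ne_zero).symm
    _ ≤ ((∑ i ∈ s, f i) / #s) ^ #s := by gcongr; exact rpow_nonneg (prod_nonneg hf) _

theorem Matrix.PosSemidef.det_le_trace_div_card_pow {n : Type*} [Fintype n] [DecidableEq n]
    {A : Matrix n n ℝ} (hA : A.PosSemidef) :
    A.det ≤ (A.trace / Fintype.card n) ^ Fintype.card n := by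
  rw [hA.isHermitian.det_eq_prod_eigenvalues, hA.isHermitian.trace_eq_sum_eigenvalues]
  simpa using prod_le_sum_div_card_pow univ _ fun i _ ↦ hA.eigenvalues_nonneg i

theorem Matrix.abs_det_le_of_abs_le {n : Type*} [Fintype n] [DecidableEq n]
    {C : Matrix n n ℝ} {M : ℝ} (hC : ∀ i j, |C i j| ≤ M) :
    |C.det| ≤ (√(Fintype.card n) * M) ^ Fintype.card n := by
  obtain hn | hn := isEmpty_or_nonempty n
  · simp
  set d := Fintype.card n
  have hM : 0 ≤ M := (abs_nonneg _).trans (hC hn.some hn.some)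
  have hd : (0 : ℝ) < d := by exact_mod_cast Fintype.card_pos
  have hpsd : (Cᵀ * C).PosSemidef := by simpa using posSemidef_conjTranspose_mul_self C
  have htrace : (Cᵀ * C).trace ≤ d * (d * M ^ 2) :=
    calc (Cᵀ * C).trace = ∑ j, ∑ i, C i j ^ 2 := by simp [Matrix.trace, mul_apply, sq]
      _ ≤ ∑ _j : n, ∑ _i : n, M ^ 2 :=
          sum_le_sum fun j _ ↦ sum_le_sum fun i _ ↦
            sq_le_sq.mpr ((hC i j).trans (le_abs_self M))
      _ = d * (d * M ^ 2) := by simp [d]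
  have hsq : C.det ^ 2 ≤ ((√d * M) ^ d) ^ 2 :=
    calc C.det ^ 2 = (Cᵀ * C).det := by simp [sq]
      _ ≤ ((Cᵀ * C).trace / d) ^ d := hpsd.det_le_trace_div_card_pow
      _ ≤ (d * M ^ 2) ^ d := by
          gcongr
          · exact div_nonneg hpsd.trace_nonneg hd.le
          · rwa [div_le_iff₀' hd]
      _ = ((√d * M) ^ d) ^ 2 := by
          conv_lhs => rw [← sq_sqrt hd.le]
          ring
  exact abs_le_of_sq_le_sq hsq (by positivity)

theorem det_eq_mul_det_geStep_submatrix {d : ℕ} (C : Matrix (Fin (d + 1)) (Fin (d + 1)) ℝ)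
    (h : C 0 0 ≠ 0) :
    C.det = C 0 0 * ((geStep C 0 0).submatrix Fin.succ Fin.succ).det := by
  -- `B` differs from `C` by row operations, and its first column is `C 0 0` followed by zeros.
  set B := (geStep C 0 0).updateRow 0 (C 0)
  have hB : B.det = C.det := by
    refine det_eq_of_forall_row_eq_smul_add_const
      (fun i ↦ if i = 0 then 0 else -(C i 0 / C 0 0)) 0 (if_pos rfl) fun i j ↦ ?_
    rcases eq_or_ne i 0 with rfl | hi
    · simp [B]
    · simp only [B, updateRow_ne hi, geStep, of_apply, if_neg hi]
      ring
  have hB_col : ∀ i, i ≠ 0 → B i 0 = 0 := fun i hi ↦ by simp [B, geStep, hi, h]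
  rw [← hB, det_succ_column_zero, Fintype.sum_eq_single 0 fun i hi ↦ by simp [hB_col i hi],
    submatrix_updateRow_succAbove, Fin.succAbove_zero]
  simp [B]

theorem abs_le_maxAbs {m n : ℕ} (A : Matrix (Fin m) (Fin n) ℝ) (s : Fin m) (t : Fin n) :
    |A s t| ≤ maxAbs A :=
  (le_ciSup (Set.finite_range _).bddAbove t).trans
    (le_ciSup (f := fun s ↦ ⨆ t, |A s t|) (Set.finite_range _).bddAbove s)

section Pivots

variable {m n : ℕ} (A : Matrix (Fin m) (Fin n) ℝ) (piv : ℕ → Fin m × Fin n)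

/-- Pivots are 0-indexed here: `pivMag A piv (r + 1) = |pivot A piv r|`. -/
noncomputable def pivot (r : ℕ) : ℝ :=
  geIter A piv r (piv r).1 (piv r).2

noncomputable def pivotBlock (r d : ℕ) : Matrix (Fin d) (Fin d) ℝ :=
  (geIter A piv r).submatrix (fun a ↦ (piv (r + a)).1) (fun b ↦ (piv (r + b)).2)

theorem pivotBlock_succ (r d : ℕ) :
    pivotBlock A piv (r + 1) d =
      (geStep (pivotBlock A piv r (d + 1)) 0 0).submatrix Fin.succ Fin.succ := by
  ext a b
  simp [pivotBlock, geIter, geStep, add_assoc, add_comm 1]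

theorem det_pivotBlock (r d : ℕ) (hpiv : ∀ s < d, pivot A piv (r + s) ≠ 0) :
    (pivotBlock A piv r d).det = ∏ s ∈ range d, pivot A piv (r + s) := by
  induction d generalizing r with
  | zero => simp
  | succ d ih =>
    have h00 : pivotBlock A piv r (d + 1) 0 0 = pivot A piv r := by simp [pivotBlock, pivot]
    rw [det_eq_mul_det_geStep_submatrix _ (h00 ▸ hpiv 0 d.succ_pos), ← pivotBlock_succ,
      ih (r + 1) fun s hs ↦ by simpa [add_assoc, add_comm 1] using hpiv (s + 1) (by omega),
      h00, prod_range_succ']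
    simp [add_assoc, add_comm 1, mul_comm]

theorem prod_pivMag_Icc (r k : ℕ) :
    ∏ i ∈ Icc (r + 1) k, pivMag A piv i = |∏ s ∈ range (k - r), pivot A piv (r + s)| := by
  rw [abs_prod, ← Ico_add_one_right_eq_Icc, prod_Ico_eq_prod_range, Nat.add_sub_add_right]
  refine prod_congr rfl fun s _ ↦ ?_
  simp [pivMag, pivot, add_right_comm r 1 s]

end Pivots

theorem prod_pivots_le_hadamard_general
    (m n k : ℕ) (A : Matrix (Fin m) (Fin n) ℝ)
    (piv : ℕ → Fin m × Fin n)
    (hpiv : ∀ r < k, geIter A piv r (piv r).1 (piv r).2 ≠ 0)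
    (β : ℕ → ℝ)
    (hβdef : ∀ r, 1 ≤ r → r ≤ k →
      β r = pivMag A piv r / maxAbs (geIter A piv (r - 1))) :
    ∀ r < k,
      ∏ i ∈ Finset.Icc (r + 1) k, pivMag A piv i ≤
        (Real.sqrt ((k : ℝ) - (r : ℝ)) * (β (r + 1))⁻¹ * pivMag A piv (r + 1)) ^ (k - r) := by
  intro r hr
  have hM : (β (r + 1))⁻¹ * pivMag A piv (r + 1) = maxAbs (geIter A piv r) := by
    have hp : pivMag A piv (r + 1) ≠ 0 := abs_ne_zero.mpr (hpiv r hr)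
    rw [hβdef (r + 1) (by omega) (by omega), Nat.add_sub_cancel, inv_div, div_mul_cancel₀ _ hp]
  have hdet := det_pivotBlock A piv r (k - r) fun s hs ↦ hpiv (r + s) (by omega)
  rw [prod_pivMag_Icc, ← hdet, mul_assoc, hM, ← Nat.cast_sub hr.le]
  simpa using (pivotBlock A piv r (k - r)).abs_det_le_of_abs_le fun a b ↦
    abs_le_maxAbs (geIter A piv r) _ _

/-- **Hadamard bound on the product of remaining pivots.** For every `0 ≤ r ≤ k-1`,
`∏_{i=r+1}^k p_i ≤ ((k-r)^{1/2} β_{r+1}⁻¹ p_{r+1})^{k-r}` (pivot magnitudes `p`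
and qualities `β` are 1-indexed). -/
theorem prod_pivots_le_hadamard
    (m n k : ℕ) (A : Matrix (Fin m) (Fin n) ℝ) (hA : A ≠ 0)
    (hk : 1 ≤ k)
    (piv : ℕ → Fin m × Fin n)
    (hpiv : ∀ r < k, geIter A piv r (piv r).1 (piv r).2 ≠ 0)
    (hrows : ∀ r < k, ∀ s < k, (piv r).1 = (piv s).1 → r = s)
    (hcols : ∀ r < k, ∀ s < k, (piv r).2 = (piv s).2 → r = s)
    (β : ℕ → ℝ)
    (hβpos : ∀ r, 1 ≤ r → r ≤ k → 0 < β r)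
    (hβle : ∀ r, 1 ≤ r → r ≤ k → β r ≤ 1)
    (hβdef : ∀ r, 1 ≤ r → r ≤ k →
      β r = pivMag A piv r / maxAbs (geIter A piv (r - 1))) :
    ∀ r < k,
      ∏ i ∈ Finset.Icc (r + 1) k, pivMag A piv i ≤
        (Real.sqrt ((k : ℝ) - (r : ℝ)) * (β (r + 1))⁻¹ * pivMag A piv (r + 1)) ^ (k - r) :=
  prod_pivots_le_hadamard_general m n k A piv hpiv β hβdef
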